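/- Let X be a locally compact Hadamard space, C ⊂ X a closed convex subset, p ∈ X, and ξ_i ∈ ∂∞X a sequence converging to ξ_∞ in the cone topology such that the geodesic ray from p asymptotic to ξ_i meets C for every i. Then either the geodesic ray from p asymptotic to ξ_∞ meets C, or ξ_∞ ∈ ∂∞C. -/

import Mathlib

open Metric Filter Set

noncomputable section

namespace CK

variable {X : Type*} {Y : Type*}

/-- A unit-speed geodesic ray, parameterized by `[0,∞)` (values at negative
times are irrelevant). -/
def IsRay [PseudoMetricSpace X] (γ : ℝ → X) : Prop :=
  ∀ s t : ℝ, 0 ≤ s → 0 ≤ t → dist (γ s) (γ t) = |s - t|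

/-- A unit-speed complete geodesic (geodesic line). -/
def IsLine [PseudoMetricSpace X] (γ : ℝ → X) : Prop :=
  ∀ s t : ℝ, dist (γ s) (γ t) = |s - t|

/-- The geodesic segment between `x` and `y`, described metrically as the set of
points lying between `x` and `y`.  In a uniquely geodesic space (e.g. a Hadamard
space) this is exactly the image of the geodesic segment from `x` to `y`. -/
def seg [PseudoMetricSpace X] (x y : X) : Set X :=
  {z | dist x z + dist z y = dist x y}

/-- A geodesic metric space: any two points are joined by a unit speed geodesic. -/
def GeodesicSpace (X : Type*) [PseudoMetricSpace X] : Prop :=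
  ∀ x y : X, ∃ f : ℝ → X, f 0 = x ∧ f (dist x y) = y ∧
    ∀ s t : ℝ, s ∈ Set.Icc 0 (dist x y) → t ∈ Set.Icc 0 (dist x y) →
      dist (f s) (f t) = |s - t|

/-- A Hadamard space: a complete metric space with midpoints satisfying the CN
inequality of Bruhat--Tits; equivalently, a complete `CAT(0)` space, i.e. a
complete simply connected length space of nonpositive curvature in the sense of
Alexandrov. -/
class HadamardSpace (X : Type*) [MetricSpace X] : Prop where
  complete : CompleteSpace X
  midpoints : ∀ x y : X, ∃ m : X, dist x m = dist x y / 2 ∧ dist m y = dist x y / 2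
  cn : ∀ x y z m : X, dist y m = dist y z / 2 → dist m z = dist y z / 2 →
    dist x m ^ 2 ≤ (dist x y ^ 2 + dist x z ^ 2) / 2 - dist y z ^ 2 / 4

/-- `X` is δ-hyperbolic: geodesic triangles are δ-thin. -/
def DeltaHyperbolic (X : Type*) [MetricSpace X] (δ : ℝ) : Prop :=
  ∀ x y z : X, ∀ w ∈ seg x y, infDist w (seg x z ∪ seg z y) ≤ δ

/-- Two geodesic rays are asymptotic if they stay at bounded distance from each
other. -/
def Asymptotic [PseudoMetricSpace X] (γ₁ γ₂ : ℝ → X) : Prop :=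
  ∃ C : ℝ, ∀ t : ℝ, 0 ≤ t → dist (γ₁ t) (γ₂ t) ≤ C

/-- The space of unit-speed geodesic rays of `X`. -/
def RaySp (X : Type*) [MetricSpace X] := {γ : ℝ → X // IsRay γ}

instance raySetoid (X : Type*) [MetricSpace X] : Setoid (RaySp X) where
  r γ₁ γ₂ := Asymptotic γ₁.1 γ₂.1
  iseqv := by
    refine ⟨fun γ => ⟨0, fun t _ => by simp⟩, ?_, ?_⟩
    · rintro γ₁ γ₂ ⟨C, hC⟩
      exact ⟨C, fun t ht => by rw [dist_comm]; exact hC t ht⟩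
    · rintro γ₁ γ₂ γ₃ ⟨C, hC⟩ ⟨C', hC'⟩
      exact ⟨C + C', fun t ht => (dist_triangle _ _ _).trans (add_le_add (hC t ht) (hC' t ht))⟩

/-- The ideal boundary `∂∞ X` of `X`: asymptote classes of unit-speed geodesic
rays. -/
def Bd (X : Type*) [MetricSpace X] := Quotient (raySetoid X)

/-- The boundary point determined by a geodesic ray. -/
def rayCls [MetricSpace X] (γ : ℝ → X) (h : IsRay γ) : Bd X :=
  Quotient.mk (raySetoid X) ⟨γ, h⟩

/-- `ξ ∈ ∂∞ S` : the boundary point `ξ` is represented by a ray contained in the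
subset `S`. -/
def BdIn [MetricSpace X] (ξ : Bd X) (S : Set X) : Prop :=
  ∃ (γ : ℝ → X) (h : IsRay γ), rayCls γ h = ξ ∧ ∀ t : ℝ, 0 ≤ t → γ t ∈ S

/-- The ideal boundary of a subset `S ⊆ X`, as a subset of `∂∞ X`. -/
def bdOf [MetricSpace X] (S : Set X) : Set (Bd X) := {ξ | BdIn ξ S}

/-- A sequence of interior points converges to the boundary point `ζ` in the cone
topology: for each ray `γ` representing `ζ`, the geodesic segments from the
basepoint `γ 0` to `x n` converge to `γ` uniformly on compact subsets. -/
def ConeTendsto [MetricSpace X] (x : ℕ → X) (ζ : Bd X) : Prop :=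
  ∀ (γ : ℝ → X) (h : IsRay γ), rayCls γ h = ζ →
    ∀ t : ℝ, 0 ≤ t → ∀ ε : ℝ, 0 < ε → ∃ N : ℕ, ∀ n : ℕ, N ≤ n →
      t ≤ dist (γ 0) (x n) ∧ ∃ z ∈ seg (γ 0) (x n), dist (γ 0) z = t ∧ dist z (γ t) ≤ ε

/-- A sequence of boundary points converges to the boundary point `ζ` in the cone
topology: the representing rays from any fixed basepoint converge uniformly on
compact subsets (equivalently, pointwise, the rays being 1-Lipschitz). -/
def BdTendsto [MetricSpace X] (ξ : ℕ → Bd X) (ζ : Bd X) : Prop :=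
  ∀ (p : X) (γ : ℕ → ℝ → X) (h : ∀ n, IsRay (γ n)) (γ' : ℝ → X) (h' : IsRay γ'),
    (∀ n, γ n 0 = p) → γ' 0 = p → (∀ n, rayCls (γ n) (h n) = ξ n) → rayCls γ' h' = ζ →
    ∀ t : ℝ, 0 ≤ t → Tendsto (fun n => γ n t) atTop (nhds (γ' t))

/-- The comparison angle at `p` of the triangle `(p, x, y)`. -/
def cmpAngle [MetricSpace X] (p x y : X) : ℝ :=
  Real.arccos ((dist p x ^ 2 + dist p y ^ 2 - dist x y ^ 2) / (2 * dist p x * dist p y))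

/-- The Tits angle between two geodesic rays with a common basepoint, as the
limit (= supremum, by comparison monotonicity in a `CAT(0)` space) of comparison
angles. -/
def titsRays [MetricSpace X] (γ₁ γ₂ : ℝ → X) : ℝ :=
  ⨆ t : Set.Ioi (0 : ℝ), cmpAngle (γ₁ 0) (γ₁ t.1) (γ₂ t.1)

/-- The Tits angle between two boundary points (in a Hadamard space the defining
set is a singleton, being independent of the chosen representing rays with common
basepoint). -/
def titsAngle [MetricSpace X] (ξ η : Bd X) : ℝ :=
  sSup {a | ∃ (γ₁ γ₂ : ℝ → X) (h₁ : IsRay γ₁) (h₂ : IsRay γ₂),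
    γ₁ 0 = γ₂ 0 ∧ rayCls γ₁ h₁ = ξ ∧ rayCls γ₂ h₂ = η ∧ a = titsRays γ₁ γ₂}

/-- `(L,A)`-quasi-isometric embedding. -/
def QIE [PseudoMetricSpace X] [PseudoMetricSpace Y] (L A : ℝ) (f : X → Y) : Prop :=
  ∀ x₁ x₂ : X, L⁻¹ * dist x₁ x₂ - A ≤ dist (f x₁) (f x₂) ∧
    dist (f x₁) (f x₂) ≤ L * dist x₁ x₂ + A

/-- `(L,A)`-quasi-isometry. -/
def QI [PseudoMetricSpace X] [PseudoMetricSpace Y] (L A : ℝ) (f : X → Y) : Prop :=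
  QIE L A f ∧ ∀ y : Y, ∃ x : X, dist y (f x) ≤ A

/-- `Φb` is a boundary extension of `Φ : X → Y` which is (sequentially) continuous
at every point of `∂∞ X` with respect to the cone topologies on the standard
compactifications `X ∪ ∂∞X` and `Y ∪ ∂∞Y`. -/
def IsBdryExtension [MetricSpace X] [MetricSpace Y] (Φ : X → Y) (Φb : Bd X → Bd Y) : Prop :=
  (∀ (x : ℕ → X) (ζ : Bd X), ConeTendsto x ζ → ConeTendsto (fun n => Φ (x n)) (Φb ζ)) ∧
  (∀ (ξ : ℕ → Bd X) (ζ : Bd X), BdTendsto ξ ζ → BdTendsto (fun n => Φb (ξ n)) (Φb ζ))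

/-- A homeomorphism of ideal boundaries with respect to the cone topologies
(which, the boundaries being compact metrizable, may be expressed by sequential
continuity in both directions). -/
def IsBdryHomeo [MetricSpace X] [MetricSpace Y] (F : Bd X → Bd Y) : Prop :=
  Function.Bijective F ∧
  (∀ (ξ : ℕ → Bd X) (ζ : Bd X), BdTendsto ξ ζ → BdTendsto (fun n => F (ξ n)) (F ζ)) ∧
  (∀ (ξ : ℕ → Bd X) (ζ : Bd X), BdTendsto (fun n => F (ξ n)) (F ζ) → BdTendsto ξ ζ)

/-- A topological embedding of ideal boundaries, expressed sequentially. -/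
def IsBdryEmbedding [MetricSpace X] [MetricSpace Y] (F : Bd X → Bd Y) : Prop :=
  Function.Injective F ∧
  (∀ (ξ : ℕ → Bd X) (ζ : Bd X), BdTendsto ξ ζ → BdTendsto (fun n => F (ξ n)) (F ζ)) ∧
  (∀ (ξ : ℕ → Bd X) (ζ : Bd X), BdTendsto (fun n => F (ξ n)) (F ζ) → BdTendsto ξ ζ)

/-- An axis of the map `g`, with translation length `τ`: a complete geodesic
translated by `g` through the (positive) minimal displacement `τ` of `g`. -/
def IsAxisOf [MetricSpace X] (g : X → X) (τ : ℝ) (γ : ℝ → X) : Prop :=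
  IsLine γ ∧ 0 < τ ∧ (∀ t : ℝ, g (γ t) = γ (t + τ)) ∧ ∀ x : X, τ ≤ dist (g x) x

/-- The forward ideal endpoint of a geodesic line. -/
def fwdCls [MetricSpace X] {γ : ℝ → X} (h : IsLine γ) : Bd X :=
  rayCls γ (fun s t _ _ => h s t)

/-- The backward ideal endpoint of a geodesic line. -/
def bwdCls [MetricSpace X] {γ : ℝ → X} (h : IsLine γ) : Bd X :=
  rayCls (fun t => γ (-t)) (fun s t _ _ => by
    rw [h (-s) (-t), show -s - -t = -(s - t) by ring, abs_neg])

end CK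


namespace CK


section AuxForStatement3

variable {X : Type*}

/-- Midpoint predicate. -/
def IsMid [MetricSpace X] (x y m : X) : Prop :=
  dist x m = dist x y / 2 ∧ dist m y = dist x y / 2

/-- Iterated dyadic midpoints. -/
def dyadic (m : X → X → X) (x y : X) : ℕ → ℕ → X
  | 0, k => if k = 0 then x else y
  | n+1, k =>
    if k % 2 = 0 then dyadic m x y n (k / 2)
    else m (dyadic m x y n (k / 2)) (dyadic m x y n (k / 2 + 1))

theorem dyadic_zero (m : X → X → X) (x y : X) (n : ℕ) : dyadic m x y n 0 = x := by
  induction n with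
  | zero => simp [dyadic]
  | succ n ih => simp [dyadic, ih]

theorem dyadic_top (m : X → X → X) (x y : X) (n : ℕ) : dyadic m x y n (2 ^ n) = y := by
  induction n with
  | zero => simp [dyadic]
  | succ n ih =>
    have h1 : 2 ^ (n + 1) % 2 = 0 := by omega
    have h2 : 2 ^ (n + 1) / 2 = 2 ^ n := by omega
    simp [dyadic, h1, h2, ih]

variable [MetricSpace X]

theorem IsMid.symm {x y m : X} (h : IsMid x y m) : IsMid y x m := by
  constructor
  · rw [dist_comm y m, dist_comm y x]; exact h.2
  · rw [dist_comm m x, dist_comm y x]; exact h.1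

theorem dyadic_consec {m : X → X → X} (hm : ∀ a b, IsMid a b (m a b)) (x y : X) :
    ∀ n k, k < 2 ^ n →
      dist (dyadic m x y n k) (dyadic m x y n (k + 1)) = dist x y / 2 ^ n := by
  intro n
  induction n with
  | zero =>
    intro k hk
    interval_cases k
    simp [dyadic]
  | succ n ih =>
    intro k hk
    rcases Nat.even_or_odd k with ⟨j, hj⟩ | ⟨j, hj⟩
    · subst hj
      have hj2 : j < 2 ^ n := by omega
      have e0 : (j + j) % 2 = 0 := by omega
      have e1 : (j + j) / 2 = j := by omega
      have e2 : (j + j + 1) % 2 = 1 := by omega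
      have e3 : (j + j + 1) / 2 = j := by omega
      simp only [dyadic, e0, e1, e2, e3, if_true, if_false, one_ne_zero, reduceIte]
      rw [(hm _ _).1, ih j hj2]
      ring
    · subst hj
      have hj2 : j + 1 ≤ 2 ^ n := by omega
      have hj3 : j < 2 ^ n := by omega
      have e0 : (2 * j + 1) % 2 = 1 := by omega
      have e1 : (2 * j + 1) / 2 = j := by omega
      have e2 : (2 * j + 1 + 1) % 2 = 0 := by omega
      have e3 : (2 * j + 1 + 1) / 2 = j + 1 := by omega
      simp only [dyadic, e0, e1, e2, e3, one_ne_zero, reduceIte]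
      rw [(hm _ _).2, ih j hj3]
      ring

theorem dyadic_chain {m : X → X → X} (hm : ∀ a b, IsMid a b (m a b)) (x y : X)
    (n : ℕ) : ∀ j k, k + j ≤ 2 ^ n →
      dist (dyadic m x y n k) (dyadic m x y n (k + j)) ≤ j * (dist x y / 2 ^ n) := by
  intro j
  induction j with
  | zero => intro k _; simp
  | succ j ih =>
    intro k hk
    have h1 := ih k (by omega)
    have h2 := dyadic_consec hm x y n (k + j) (by omega)
    calc dist (dyadic m x y n k) (dyadic m x y n (k + (j + 1)))
        ≤ dist (dyadic m x y n k) (dyadic m x y n (k + j)) +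
          dist (dyadic m x y n (k + j)) (dyadic m x y n (k + j + 1)) := by
          rw [show k + (j + 1) = k + j + 1 by ring]; exact dist_triangle _ _ _
      _ ≤ j * (dist x y / 2 ^ n) + dist x y / 2 ^ n := by rw [h2]; linarith
      _ = (j + 1 : ℕ) * (dist x y / 2 ^ n) := by push_cast; ring

theorem dyadic_dist {m : X → X → X} (hm : ∀ a b, IsMid a b (m a b)) (x y : X)
    (n : ℕ) {k l : ℕ} (hkl : k ≤ l) (hl : l ≤ 2 ^ n) :
    dist (dyadic m x y n k) (dyadic m x y n l) = ((l : ℝ) - k) * (dist x y / 2 ^ n) := by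
  have hle : dist (dyadic m x y n k) (dyadic m x y n l) ≤ ((l : ℝ) - k) * (dist x y / 2 ^ n) := by
    have := dyadic_chain hm x y n (l - k) k (by omega)
    rw [show k + (l - k) = l by omega] at this
    calc dist (dyadic m x y n k) (dyadic m x y n l) ≤ ((l - k : ℕ) : ℝ) * (dist x y / 2 ^ n) :=
        this
      _ = ((l : ℝ) - k) * (dist x y / 2 ^ n) := by
        rw [Nat.cast_sub hkl]
  have h0k : dist x (dyadic m x y n k) ≤ (k : ℝ) * (dist x y / 2 ^ n) := by
    have := dyadic_chain hm x y n k 0 (by omega)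
    simpa [dyadic_zero] using this
  have hl2 : dist (dyadic m x y n l) y ≤ ((2 ^ n : ℝ) - l) * (dist x y / 2 ^ n) := by
    have := dyadic_chain hm x y n (2 ^ n - l) l (by omega)
    rw [show l + (2 ^ n - l) = 2 ^ n by omega, dyadic_top] at this
    calc dist (dyadic m x y n l) y ≤ ((2 ^ n - l : ℕ) : ℝ) * (dist x y / 2 ^ n) := this
      _ = ((2 ^ n : ℝ) - l) * (dist x y / 2 ^ n) := by
        rw [Nat.cast_sub hl]; push_cast; ring
  have htot : dist x y ≤ dist x (dyadic m x y n k) + dist (dyadic m x y n k) (dyadic m x y n l) +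
      dist (dyadic m x y n l) y := by
    calc dist x y ≤ dist x (dyadic m x y n l) + dist (dyadic m x y n l) y := dist_triangle _ _ _
      _ ≤ dist x (dyadic m x y n k) + dist (dyadic m x y n k) (dyadic m x y n l) +
          dist (dyadic m x y n l) y := by
          have := dist_triangle x (dyadic m x y n k) (dyadic m x y n l); linarith
  have hpow : (0 : ℝ) < 2 ^ n := by positivity
  have hxy : (2 ^ n : ℝ) * (dist x y / 2 ^ n) = dist x y := by field_simp
  have hge : ((l : ℝ) - k) * (dist x y / 2 ^ n) ≤ dist (dyadic m x y n k) (dyadic m x y n l) := by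
    nlinarith [h0k, hl2, htot]
  linarith


theorem dyadic_dist' {m : X → X → X} (hm : ∀ a b, IsMid a b (m a b)) (x y : X)
    (n : ℕ) {k l : ℕ} (hk : k ≤ 2 ^ n) (hl : l ≤ 2 ^ n) :
    dist (dyadic m x y n k) (dyadic m x y n l) = |(k : ℝ) - l| * (dist x y / 2 ^ n) := by
  rcases le_total k l with h | h
  · rw [dyadic_dist hm x y n h hl,
      abs_of_nonpos (sub_nonpos.2 (by exact_mod_cast Nat.cast_le.2 h))]
    ring
  · rw [dist_comm, dyadic_dist hm x y n h hk,
      abs_of_nonneg (sub_nonneg.2 (by exact_mod_cast Nat.cast_le.2 h))]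

theorem mid_cmp_left [HadamardSpace X] {x y z mm mm' : X}
    (hm : IsMid x y mm) (hm' : IsMid x z mm') : dist mm mm' ≤ dist y z / 2 := by
  have h1 := HadamardSpace.cn y x z mm' hm'.1 hm'.2
  have h2 := HadamardSpace.cn mm' x y mm hm.1 hm.2
  have e1 : dist mm' x = dist x z / 2 := by rw [dist_comm]; exact hm'.1
  have e2 : dist mm' y = dist y mm' := dist_comm _ _
  have e3 : dist y x = dist x y := dist_comm _ _
  have e4 : (dist x z / 2) ^ 2 = dist x z ^ 2 / 4 := by ring
  rw [e1, e2, e4] at h2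
  rw [e3] at h1
  have hnn : (0:ℝ) ≤ dist y z := dist_nonneg
  have hnn2 : (0:ℝ) ≤ dist mm' mm := dist_nonneg
  have hsq : dist mm' mm ^ 2 ≤ (dist y z / 2) ^ 2 := by
    have e5 : (dist y z / 2) ^ 2 = dist y z ^ 2 / 4 := by ring
    rw [e5]; linarith
  rw [dist_comm]
  nlinarith [hsq, hnn, hnn2]

theorem mid_cmp [HadamardSpace X] {x y x' y' mm mm' : X}
    (hm : IsMid x y mm) (hm' : IsMid x' y' mm') :
    dist mm mm' ≤ (dist x x' + dist y y') / 2 := by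
  obtain ⟨m₃, h3a, h3b⟩ := HadamardSpace.midpoints x y'
  have h3 : IsMid x y' m₃ := ⟨h3a, h3b⟩
  have h1 : dist mm m₃ ≤ dist y y' / 2 := mid_cmp_left hm h3
  have h2 : dist m₃ mm' ≤ dist x x' / 2 := mid_cmp_left h3.symm hm'.symm
  calc dist mm mm' ≤ dist mm m₃ + dist m₃ mm' := dist_triangle _ _ _
    _ ≤ (dist x x' + dist y y') / 2 := by linarith

/-- Existence of unit-speed geodesics in a Hadamard space. -/
theorem exists_geodesic [HadamardSpace X] (x y : X) :
    ∃ f : ℝ → X, f 0 = x ∧ f (dist x y) = y ∧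
      ∀ s ∈ Icc 0 (dist x y), ∀ t ∈ Icc 0 (dist x y), dist (f s) (f t) = |s - t| := by
  haveI : CompleteSpace X := HadamardSpace.complete
  set d := dist x y with hd
  have hd0 : 0 ≤ d := dist_nonneg
  rcases eq_or_lt_of_le hd0 with hzero | hpos
  · -- degenerate case
    have hyx : y = x := by
      rw [← dist_eq_zero, dist_comm, ← hd, ← hzero]
    refine ⟨fun _ => x, rfl, by simp [hyx], ?_⟩
    intro s hs t ht
    rw [← hzero] at hs ht
    have hs0 : s = 0 := le_antisymm hs.2 hs.1
    have ht0 : t = 0 := le_antisymm ht.2 ht.1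
    simp [hs0, ht0]
  · -- main case
    set m : X → X → X := fun a b => (HadamardSpace.midpoints a b).choose with hmdef
    have hm : ∀ a b, IsMid a b (m a b) := fun a b => (HadamardSpace.midpoints a b).choose_spec
    set a : ℝ → ℕ → X := fun u n => dyadic m x y n ⌊u * 2 ^ n⌋₊ with hadef
    have hfloor_le : ∀ u : ℝ, u ∈ Icc (0:ℝ) 1 → ∀ n : ℕ, ⌊u * 2 ^ n⌋₊ ≤ 2 ^ n := by
      intro u hu n
      have : u * 2 ^ n ≤ 2 ^ n := by nlinarith [hu.2, (by positivity : (0:ℝ) < 2 ^ n)]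
      calc ⌊u * 2 ^ n⌋₊ ≤ ⌊(2 ^ n : ℝ)⌋₊ := Nat.floor_le_floor this
        _ = 2 ^ n := by
          rw [show ((2:ℝ) ^ n) = ((2 ^ n : ℕ) : ℝ) by push_cast; ring, Nat.floor_natCast]
    have hdistab : ∀ u ∈ Icc (0:ℝ) 1, ∀ v ∈ Icc (0:ℝ) 1, ∀ n : ℕ,
        dist (a u n) (a v n) = |(⌊u * 2 ^ n⌋₊ : ℝ) - ⌊v * 2 ^ n⌋₊| * (d / 2 ^ n) := by
      intro u hu v hv n
      exact dyadic_dist' hm x y n (hfloor_le u hu n) (hfloor_le v hv n)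
    have hcau : ∀ u : ℝ, u ∈ Icc (0:ℝ) 1 → CauchySeq (a u) := by
      intro u hu
      apply cauchySeq_of_le_geometric (1/2 : ℝ) d (by norm_num)
      intro n
      have hun : 0 ≤ u * 2 ^ n := mul_nonneg hu.1 (by positivity)
      have key1 : 2 * ⌊u * 2 ^ n⌋₊ ≤ ⌊u * 2 ^ (n+1)⌋₊ := by
        apply Nat.le_floor
        push_cast
        have := Nat.floor_le hun
        calc (2:ℝ) * ⌊u * 2 ^ n⌋₊ ≤ 2 * (u * 2 ^ n) := by linarith
          _ = u * 2 ^ (n+1) := by ring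
      have key2 : ⌊u * 2 ^ (n+1)⌋₊ ≤ 2 * ⌊u * 2 ^ n⌋₊ + 1 := by
        have h1 : u * 2 ^ (n+1) < 2 * (⌊u * 2 ^ n⌋₊ + 1) := by
          have := Nat.lt_floor_add_one (u * 2 ^ n)
          calc u * 2 ^ (n+1) = 2 * (u * 2 ^ n) := by ring
            _ < 2 * (⌊u * 2 ^ n⌋₊ + 1) := by linarith
        have h2 : ⌊u * 2 ^ (n+1)⌋₊ < 2 * ⌊u * 2 ^ n⌋₊ + 2 := by
          rw [Nat.floor_lt (mul_nonneg hu.1 (by positivity))]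
          push_cast
          linarith
        omega
      have hcompat : a u n = dyadic m x y (n+1) (2 * ⌊u * 2 ^ n⌋₊) := by
        simp only [hadef, dyadic]
        have e0 : (2 * ⌊u * 2 ^ n⌋₊) % 2 = 0 := by omega
        have e1 : (2 * ⌊u * 2 ^ n⌋₊) / 2 = ⌊u * 2 ^ n⌋₊ := by omega
        simp [e0, e1]
      have hb1 : 2 * ⌊u * 2 ^ n⌋₊ ≤ 2 ^ (n+1) := by
        have := hfloor_le u hu n; omega
      have hb2 : ⌊u * 2 ^ (n+1)⌋₊ ≤ 2 ^ (n+1) := hfloor_le u hu (n+1)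
      have hdd := dyadic_dist' hm x y (n+1) hb1 hb2
      have habs : |((2 * ⌊u * 2 ^ n⌋₊ : ℕ) : ℝ) - ((⌊u * 2 ^ (n+1)⌋₊ : ℕ) : ℝ)| ≤ 1 := by
        have k1' : ((2 * ⌊u * 2 ^ n⌋₊ : ℕ) : ℝ) ≤ ((⌊u * 2 ^ (n+1)⌋₊ : ℕ) : ℝ) :=
          Nat.cast_le.2 key1
        have k2' : ((⌊u * 2 ^ (n+1)⌋₊ : ℕ) : ℝ) ≤ ((2 * ⌊u * 2 ^ n⌋₊ + 1 : ℕ) : ℝ) :=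
          Nat.cast_le.2 key2
        rw [abs_le]
        push_cast at k1' k2' ⊢
        constructor <;> linarith
      calc dist (a u n) (a u (n+1))
          = |((2 * ⌊u * 2 ^ n⌋₊ : ℕ) : ℝ) - ((⌊u * 2 ^ (n+1)⌋₊ : ℕ) : ℝ)| * (d / 2 ^ (n+1)) := by
            rw [hcompat]; exact hdd
        _ ≤ 1 * (d / 2 ^ (n+1)) := by
            apply mul_le_mul_of_nonneg_right habs (by positivity)
        _ ≤ d * (1/2) ^ n := by
            rw [one_mul, div_pow, one_pow, mul_one_div]
            have h2n : (2:ℝ) ^ n ≤ 2 ^ (n+1) := by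
              apply pow_le_pow_right₀ (by norm_num); omega
            gcongr
    -- limits
    have hlimex : ∀ u : ℝ, u ∈ Icc (0:ℝ) 1 → ∃ z : X, Tendsto (a u) atTop (nhds z) :=
      fun u hu => cauchySeq_tendsto_of_complete (hcau u hu)
    set h : ℝ → X := fun u => if hu : u ∈ Icc (0:ℝ) 1 then (hlimex u hu).choose else x with hhdef
    have hh : ∀ u : ℝ, ∀ hu : u ∈ Icc (0:ℝ) 1, Tendsto (a u) atTop (nhds (h u)) := by
      intro u hu
      simp only [hhdef, dif_pos hu]
      exact (hlimex u hu).choose_spec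
    have hfloorconv : ∀ u : ℝ, 0 ≤ u →
        Tendsto (fun n : ℕ => (⌊u * 2 ^ n⌋₊ : ℝ) / 2 ^ n) atTop (nhds u) := by
      intro u hu0
      rw [tendsto_iff_dist_tendsto_zero]
      apply squeeze_zero (fun n => dist_nonneg) (g := fun n : ℕ => (1:ℝ) / 2 ^ n)
      · intro n
        have h1 : (⌊u * 2 ^ n⌋₊ : ℝ) ≤ u * 2 ^ n := Nat.floor_le (mul_nonneg hu0 (by positivity))
        have h2 : u * 2 ^ n < ⌊u * 2 ^ n⌋₊ + 1 := Nat.lt_floor_add_one _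
        have hp : (0:ℝ) < 2 ^ n := by positivity
        have hA : (⌊u * 2 ^ n⌋₊ : ℝ) / 2 ^ n ≤ u := by rw [div_le_iff₀ hp]; linarith
        have hB : u ≤ (⌊u * 2 ^ n⌋₊ : ℝ) / 2 ^ n + 1 / 2 ^ n := by
          rw [← add_div, le_div_iff₀ hp]; linarith
        rw [Real.dist_eq, abs_le]
        constructor <;> linarith
      · have := tendsto_pow_atTop_nhds_zero_of_lt_one
          (by norm_num : (0:ℝ) ≤ 1/2) (by norm_num : (1/2:ℝ) < 1)
        simpa [one_div, inv_pow] using this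
    have hdistfinal : ∀ u ∈ Icc (0:ℝ) 1, ∀ v ∈ Icc (0:ℝ) 1,
        dist (h u) (h v) = |u - v| * d := by
      intro u hu v hv
      have t1 : Tendsto (fun n => dist (a u n) (a v n)) atTop (nhds (dist (h u) (h v))) :=
        (hh u hu).dist (hh v hv)
      have t2 : Tendsto (fun n => dist (a u n) (a v n)) atTop (nhds (|u - v| * d)) := by
        have heq : ∀ n : ℕ, dist (a u n) (a v n) =
            |(⌊u * 2 ^ n⌋₊ : ℝ) / 2 ^ n - (⌊v * 2 ^ n⌋₊ : ℝ) / 2 ^ n| * d := by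
          intro n
          rw [hdistab u hu v hv n, div_sub_div_same, abs_div, abs_of_pos
            (by positivity : (0:ℝ) < (2:ℝ)^n)]
          ring
        rw [show (fun n => dist (a u n) (a v n)) = fun n =>
            |(⌊u * 2 ^ n⌋₊ : ℝ) / 2 ^ n - (⌊v * 2 ^ n⌋₊ : ℝ) / 2 ^ n| * d from funext heq]
        have := ((hfloorconv u hu.1).sub (hfloorconv v hv.1)).abs.mul_const d
        exact this
      exact tendsto_nhds_unique t1 t2
    have h0 : h 0 = x := by
      have : Tendsto (a 0) atTop (nhds x) := by
        have : ∀ n : ℕ, a 0 n = x := by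
          intro n
          simp only [hadef]
          rw [show ⌊(0:ℝ) * 2 ^ n⌋₊ = 0 by simp, dyadic_zero]
        rw [funext this]
        exact tendsto_const_nhds
      exact tendsto_nhds_unique (hh 0 (by constructor <;> norm_num)) this
    have h1 : h 1 = y := by
      have : Tendsto (a 1) atTop (nhds y) := by
        have : ∀ n : ℕ, a 1 n = y := by
          intro n
          simp only [hadef]
          rw [show ⌊(1:ℝ) * 2 ^ n⌋₊ = 2 ^ n by
            rw [one_mul, show ((2:ℝ) ^ n) = ((2 ^ n : ℕ) : ℝ) by push_cast; ring,
              Nat.floor_natCast], dyadic_top]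
        rw [funext this]
        exact tendsto_const_nhds
      exact tendsto_nhds_unique (hh 1 (by constructor <;> norm_num)) this
    refine ⟨fun t => h (t / d), by simpa using h0, by
      show h (d / d) = y
      rw [div_self (ne_of_gt hpos)]; exact h1, ?_⟩
    intro s hs t ht
    have hsu : s / d ∈ Icc (0:ℝ) 1 := ⟨div_nonneg hs.1 hd0, by
      rw [div_le_one hpos]; exact hs.2⟩
    have htu : t / d ∈ Icc (0:ℝ) 1 := ⟨div_nonneg ht.1 hd0, by
      rw [div_le_one hpos]; exact ht.2⟩
    rw [hdistfinal _ hsu _ htu, div_sub_div_same, abs_div,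
      abs_of_pos hpos]
    field_simp

/-- Convexity of the distance between two unit-speed geodesics defined on `[0, T]`. -/
theorem conv_lemma [HadamardSpace X] {u v : ℝ → X} {T : ℝ} (hT : 0 < T)
    (hu : ∀ a ∈ Icc 0 T, ∀ b ∈ Icc 0 T, dist (u a) (u b) = |a - b|)
    (hv : ∀ a ∈ Icc 0 T, ∀ b ∈ Icc 0 T, dist (v a) (v b) = |a - b|)
    {s : ℝ} (hs : s ∈ Icc 0 T) :
    dist (u s) (v s) ≤ (1 - s / T) * dist (u 0) (v 0) + (s / T) * dist (u T) (v T) := by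
  set A := dist (u 0) (v 0) with hA
  set B := dist (u T) (v T) with hB
  -- midpoint property of geodesics
  have humid : ∀ a ∈ Icc (0:ℝ) T, ∀ b ∈ Icc (0:ℝ) T, a ≤ b → IsMid (u a) (u b) (u ((a+b)/2)) := by
    intro a ha b hb hab
    have hmem : (a+b)/2 ∈ Icc (0:ℝ) T := ⟨by linarith [ha.1, hb.1], by linarith [ha.2, hb.2]⟩
    constructor
    · rw [hu a ha _ hmem, hu a ha b hb, abs_of_nonpos (by linarith), abs_of_nonpos (by linarith)]
      ring
    · rw [hu _ hmem b hb, hu a ha b hb, abs_of_nonpos (by linarith), abs_of_nonpos (by linarith)]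
      ring
  have hvmid : ∀ a ∈ Icc (0:ℝ) T, ∀ b ∈ Icc (0:ℝ) T, a ≤ b → IsMid (v a) (v b) (v ((a+b)/2)) := by
    intro a ha b hb hab
    have hmem : (a+b)/2 ∈ Icc (0:ℝ) T := ⟨by linarith [ha.1, hb.1], by linarith [ha.2, hb.2]⟩
    constructor
    · rw [hv a ha _ hmem, hv a ha b hb, abs_of_nonpos (by linarith), abs_of_nonpos (by linarith)]
      ring
    · rw [hv _ hmem b hb, hv a ha b hb, abs_of_nonpos (by linarith), abs_of_nonpos (by linarith)]
      ring
  -- dyadic step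
  have key : ∀ n : ℕ, ∀ k : ℕ, k ≤ 2 ^ n →
      dist (u ((k : ℝ) * T / 2 ^ n)) (v ((k : ℝ) * T / 2 ^ n)) ≤
        (1 - (k : ℝ) / 2 ^ n) * A + ((k : ℝ) / 2 ^ n) * B := by
    intro n
    induction n with
    | zero =>
      intro k hk
      interval_cases k
      · simpa using le_of_eq hA
      · norm_num
        exact le_of_eq hB.symm
    | succ n ih =>
      intro k hk
      rcases Nat.even_or_odd k with ⟨j, hj⟩ | ⟨j, hj⟩
      · subst hj
        have hj2 : j ≤ 2 ^ n := by omega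
        have harg : ((j + j : ℕ) : ℝ) * T / 2 ^ (n+1) = (j : ℝ) * T / 2 ^ n := by
          push_cast; field_simp; ring
        have hcoef : ((j + j : ℕ) : ℝ) / 2 ^ (n+1) = (j : ℝ) / 2 ^ n := by
          push_cast; field_simp; ring
        rw [harg, hcoef]
        exact ih j hj2
      · subst hj
        have hj2 : j + 1 ≤ 2 ^ n := by omega
        have hj3 : j ≤ 2 ^ n := by omega
        have hpn : (0:ℝ) < 2 ^ n := by positivity
        have hj3' : (j:ℝ) ≤ 2 ^ n := by exact_mod_cast hj3
        have hj2' : (j:ℝ) + 1 ≤ 2 ^ n := by exact_mod_cast hj2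
        have hamem : (j : ℝ) * T / 2 ^ n ∈ Icc (0:ℝ) T := by
          constructor
          · apply div_nonneg (mul_nonneg (Nat.cast_nonneg j) hT.le) hpn.le
          · rw [div_le_iff₀ hpn]
            nlinarith [hT.le]
        have hbmem : ((j : ℝ) + 1) * T / 2 ^ n ∈ Icc (0:ℝ) T := by
          constructor
          · apply div_nonneg (mul_nonneg (by positivity) hT.le) hpn.le
          · rw [div_le_iff₀ hpn]
            nlinarith [hT.le]
        have hab : (j : ℝ) * T / 2 ^ n ≤ ((j : ℝ) + 1) * T / 2 ^ n := by
          rw [div_le_div_iff₀ hpn hpn]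
          nlinarith [hT.le, hpn]
        have hmid := mid_cmp (humid _ hamem _ hbmem hab) (hvmid _ hamem _ hbmem hab)
        have hc : ((2 * j + 1 : ℕ) : ℝ) * T / 2 ^ (n+1) =
            ((j : ℝ) * T / 2 ^ n + ((j : ℝ) + 1) * T / 2 ^ n) / 2 := by
          push_cast; field_simp; ring
        have ih1 := ih j hj3
        have ih2 := ih (j+1) hj2
        have e12 : ((j + 1 : ℕ) : ℝ) = (j : ℝ) + 1 := by push_cast; ring
        rw [e12] at ih2
        have hgoal : (1 - ((2 * j + 1 : ℕ) : ℝ) / 2 ^ (n+1)) * A +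
            (((2 * j + 1 : ℕ) : ℝ) / 2 ^ (n+1)) * B =
            (((1 - (j:ℝ) / 2 ^ n) * A + ((j:ℝ) / 2 ^ n) * B) +
             ((1 - ((j:ℝ) + 1) / 2 ^ n) * A + (((j:ℝ) + 1) / 2 ^ n) * B)) / 2 := by
          push_cast; field_simp; ring
        rw [hc, hgoal]
        exact le_trans hmid (by linarith [ih1, ih2])
  -- pass to the limit
  rcases eq_or_lt_of_le hs.1 with h0 | hspos
  · rw [← h0]
    simp
    exact le_of_eq hA.symm
  · set lam := s / T with hlam
    have hlmem : lam ∈ Icc (0:ℝ) 1 := ⟨div_nonneg hs.1 hT.le, by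
      rw [hlam, div_le_one hT]; exact hs.2⟩
    set k : ℕ → ℕ := fun n => ⌊lam * 2 ^ n⌋₊ with hkdef
    have hkle : ∀ n, k n ≤ 2 ^ n := by
      intro n
      have : lam * 2 ^ n ≤ 2 ^ n := by nlinarith [hlmem.2, (by positivity : (0:ℝ) < 2 ^ n)]
      calc k n ≤ ⌊(2 ^ n : ℝ)⌋₊ := Nat.floor_le_floor this
        _ = 2 ^ n := by
          rw [show ((2:ℝ) ^ n) = ((2 ^ n : ℕ) : ℝ) by push_cast; ring, Nat.floor_natCast]
    have hcconv : Tendsto (fun n : ℕ => (k n : ℝ) / 2 ^ n) atTop (nhds lam) := by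
      rw [tendsto_iff_dist_tendsto_zero]
      apply squeeze_zero (fun n => dist_nonneg) (g := fun n : ℕ => (1:ℝ) / 2 ^ n)
      · intro n
        have hun : 0 ≤ lam * 2 ^ n := mul_nonneg hlmem.1 (by positivity)
        have h1 : (k n : ℝ) ≤ lam * 2 ^ n := Nat.floor_le hun
        have h2 : lam * 2 ^ n < (k n : ℝ) + 1 := Nat.lt_floor_add_one _
        have hp : (0:ℝ) < 2 ^ n := by positivity
        have hA2 : (k n : ℝ) / 2 ^ n ≤ lam := by rw [div_le_iff₀ hp]; linarith
        have hB2 : lam ≤ (k n : ℝ) / 2 ^ n + 1 / 2 ^ n := by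
          rw [← add_div, le_div_iff₀ hp]; linarith
        rw [Real.dist_eq, abs_le]
        constructor <;> linarith
      · have := tendsto_pow_atTop_nhds_zero_of_lt_one
          (by norm_num : (0:ℝ) ≤ 1/2) (by norm_num : (1/2:ℝ) < 1)
        simpa [one_div, inv_pow] using this
    set sn : ℕ → ℝ := fun n => (k n : ℝ) * T / 2 ^ n with hsndef
    have hsnmem : ∀ n, sn n ∈ Icc (0:ℝ) T := by
      intro n
      have hp : (0:ℝ) < 2 ^ n := by positivity
      have hkn : (k n : ℝ) ≤ 2 ^ n := by exact_mod_cast hkle n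
      constructor
      · apply div_nonneg (mul_nonneg (Nat.cast_nonneg _) hT.le) hp.le
      · rw [hsndef]; simp only; rw [div_le_iff₀ hp]; nlinarith [hT.le]
    have hsnconv : Tendsto sn atTop (nhds s) := by
      have : Tendsto (fun n : ℕ => ((k n : ℝ) / 2 ^ n) * T) atTop (nhds (lam * T)) :=
        hcconv.mul_const T
      have heq : (fun n : ℕ => ((k n : ℝ) / 2 ^ n) * T) = sn := by
        funext n; rw [hsndef]; ring
      have heq2 : lam * T = s := by rw [hlam]; field_simp
      rw [heq, heq2] at this
      exact this
    have husn : Tendsto (fun n => u (sn n)) atTop (nhds (u s)) := by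
      rw [tendsto_iff_dist_tendsto_zero]
      have heq : ∀ n, dist (u (sn n)) (u s) = |sn n - s| := fun n => hu _ (hsnmem n) _ hs
      rw [funext heq]
      have := (hsnconv.sub_const s).abs
      simpa using this
    have hvsn : Tendsto (fun n => v (sn n)) atTop (nhds (v s)) := by
      rw [tendsto_iff_dist_tendsto_zero]
      have heq : ∀ n, dist (v (sn n)) (v s) = |sn n - s| := fun n => hv _ (hsnmem n) _ hs
      rw [funext heq]
      have := (hsnconv.sub_const s).abs
      simpa using this
    have hlhs : Tendsto (fun n => dist (u (sn n)) (v (sn n))) atTop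
        (nhds (dist (u s) (v s))) := husn.dist hvsn
    have hrhs : Tendsto (fun n => (1 - (k n : ℝ) / 2 ^ n) * A + ((k n : ℝ) / 2 ^ n) * B)
        atTop (nhds ((1 - lam) * A + lam * B)) := by
      exact ((tendsto_const_nhds.sub hcconv).mul_const A).add (hcconv.mul_const B)
    have hineq : ∀ n, dist (u (sn n)) (v (sn n)) ≤
        (1 - (k n : ℝ) / 2 ^ n) * A + ((k n : ℝ) / 2 ^ n) * B := fun n => key n (k n) (hkle n)
    have := le_of_tendsto_of_tendsto' hlhs hrhs hineq
    rwa [hlam] at this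


end AuxForStatement3

/-- Croke–Kleiner, Lemma `bdyconvex`.
Let `X` be a locally compact Hadamard space, `C ⊆ X` a closed convex subset,
`p ∈ X`, and `ξᵢ ∈ ∂∞X` a sequence converging to `ξ∞` in the cone topology
(expressed via the convergence of the representing rays `γ i` from `p` to the
representing ray `γ'` of `ξ∞`), such that the geodesic ray from `p` asymptotic to
`ξ i` meets `C` for every `i`.  Then either the geodesic ray from `p` asymptotic
to `ξ∞` meets `C`, or `ξ∞ ∈ ∂∞ C`. -/
theorem statement_3 {X : Type*} [MetricSpace X] [HadamardSpace X] [LocallyCompactSpace X]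
    (C : Set X) (hclosed : IsClosed C) (hconv : ∀ x ∈ C, ∀ y ∈ C, seg x y ⊆ C)
    (p : X) (ξ : ℕ → Bd X) (ξ' : Bd X)
    (γ : ℕ → ℝ → X) (hγ : ∀ i, IsRay (γ i)) (hstart : ∀ i, γ i 0 = p)
    (hcls : ∀ i, rayCls (γ i) (hγ i) = ξ i)
    (γ' : ℝ → X) (hγ' : IsRay γ') (hstart' : γ' 0 = p) (hcls' : rayCls γ' hγ' = ξ')
    (hconv_seq : BdTendsto ξ ξ')
    (hmeet : ∀ i, ∃ t : ℝ, 0 ≤ t ∧ γ i t ∈ C) :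
    (∃ t : ℝ, 0 ≤ t ∧ γ' t ∈ C) ∨ ξ' ∈ bdOf C := by
  classical
  haveI : CompleteSpace X := HadamardSpace.complete
  choose t ht0 htC using hmeet
  have hlim : ∀ T : ℝ, 0 ≤ T → Tendsto (fun i => γ i T) atTop (nhds (γ' T)) :=
    fun T hT => hconv_seq p γ hγ γ' hγ' hstart hstart' hcls hcls' T hT
  by_cases hbdd : ∃ M : ℝ, ∀ i, t i ≤ M
  · -- bounded case: the limit ray meets C
    left
    obtain ⟨M, hM⟩ := hbdd
    obtain ⟨ts, htsmem, φ, hφmono, hφconv⟩ :=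
      tendsto_subseq_of_bounded (isBounded_Icc (0:ℝ) M) (fun i => (⟨ht0 i, hM i⟩ : t i ∈ Icc (0:ℝ) M))
    rw [isClosed_Icc.closure_eq] at htsmem
    have hts0 : 0 ≤ ts := htsmem.1
    have hdist2 : Tendsto (fun n => dist (γ (φ n) ts) (γ' ts)) atTop (nhds 0) :=
      tendsto_iff_dist_tendsto_zero.1 ((hlim ts hts0).comp hφmono.tendsto_atTop)
    have hconv2 : Tendsto (fun n => γ (φ n) (t (φ n))) atTop (nhds (γ' ts)) := by
      rw [tendsto_iff_dist_tendsto_zero]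
      apply squeeze_zero (fun n => dist_nonneg)
        (g := fun n => |t (φ n) - ts| + dist (γ (φ n) ts) (γ' ts))
      · intro n
        calc dist (γ (φ n) (t (φ n))) (γ' ts)
            ≤ dist (γ (φ n) (t (φ n))) (γ (φ n) ts) + dist (γ (φ n) ts) (γ' ts) :=
            dist_triangle _ _ _
          _ = |t (φ n) - ts| + dist (γ (φ n) ts) (γ' ts) := by
            rw [hγ (φ n) (t (φ n)) ts (ht0 _) hts0]
      · have h1 : Tendsto (fun n => |t (φ n) - ts|) atTop (nhds 0) := by
          have := (hφconv.sub_const ts).abs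
          simpa using this
        simpa using h1.add hdist2
    exact ⟨ts, hts0, hclosed.mem_of_tendsto hconv2 (Eventually.of_forall fun n => htC (φ n))⟩
  · -- unbounded case: build a ray inside C asymptotic to γ'
    right
    push_neg at hbdd
    set q := γ 0 (t 0) with hqdef
    have hqC : q ∈ C := htC 0
    set D := dist p q with hDdef
    have hD0 : 0 ≤ D := dist_nonneg
    -- choose a subsequence going to infinity
    have hex : ∀ n : ℕ, ∃ i, ((n : ℝ) + D + 1 ≤ t i) ∧ n ≤ i := by
      intro n
      obtain ⟨i, hi⟩ := hbdd (max ((n : ℝ) + D + 1)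
        ((Finset.range (n+1)).sup' Finset.nonempty_range_add_one t))
      refine ⟨i, le_trans (le_max_left _ _) hi.le, ?_⟩
      by_contra hc2
      push_neg at hc2
      have h1 : t i ≤ (Finset.range (n+1)).sup' Finset.nonempty_range_add_one t :=
        Finset.le_sup' t (Finset.mem_range.2 (by omega))
      have h2 := le_max_right ((n : ℝ) + D + 1)
        ((Finset.range (n+1)).sup' Finset.nonempty_range_add_one t)
      linarith [hi]
    choose k hk1 hk2 using hex
    set c : ℕ → X := fun n => γ (k n) (t (k n)) with hcdef
    have hcC : ∀ n, c n ∈ C := fun n => htC (k n)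
    have hpc : ∀ n, dist p (c n) = t (k n) := by
      intro n
      rw [hcdef]
      simp only
      rw [← hstart (k n), hγ (k n) 0 (t (k n)) le_rfl (ht0 _),
        abs_of_nonpos (by linarith [ht0 (k n)])]
      ring
    set L : ℕ → ℝ := fun n => dist q (c n) with hLdef
    have hL0 : ∀ n, 0 ≤ L n := fun n => dist_nonneg
    have hLd : ∀ n, |L n - t (k n)| ≤ D := by
      intro n
      have h := abs_dist_sub_le q p (c n)
      rw [dist_comm q p] at h
      rw [hpc n] at h
      exact h
    have hL : ∀ n : ℕ, (n : ℝ) + 1 ≤ L n := by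
      intro n
      have h1 := (abs_le.1 (hLd n)).1
      linarith [hk1 n]
    have hfex := fun n => exists_geodesic q (c n)
    choose f hf0 hfL hfgeo using hfex
    set ρ : ℕ → ℝ → X := fun n s => f n (min s (L n)) with hρdef
    have hρgeo : ∀ n, ∀ a ∈ Icc 0 (L n), ∀ b ∈ Icc 0 (L n),
        dist (ρ n a) (ρ n b) = |a - b| := by
      intro n a ha b hb
      rw [hρdef]
      simp only
      rw [min_eq_left ha.2, min_eq_left hb.2]
      exact hfgeo n a ha b hb
    have hρ0 : ∀ n, ρ n 0 = q := by
      intro n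
      rw [hρdef]
      simp only
      rw [min_eq_left (hL0 n), hf0]
    have hρC : ∀ n, ∀ s : ℝ, 0 ≤ s → ρ n s ∈ C := by
      intro n s hs
      have hmem : min s (L n) ∈ Icc 0 (L n) := ⟨le_min hs (hL0 n), min_le_right _ _⟩
      apply hconv q hqC (c n) (hcC n)
      have e1 : dist q (ρ n s) = min s (L n) := by
        rw [hρdef]
        simp only
        rw [← hf0 n, hfgeo n 0 ⟨le_rfl, hL0 n⟩ _ hmem,
          abs_of_nonpos (by linarith [hmem.1])]
        ring
      have e2 : dist (ρ n s) (c n) = L n - min s (L n) := by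
        rw [hρdef]
        simp only
        rw [← hfL n, hfgeo n _ hmem (dist q (c n)) ⟨hL0 n, le_rfl⟩,
          abs_of_nonpos (by linarith [hmem.2])]
        have : dist q (c n) = L n := rfl
        rw [this]
        ring
      show dist q (ρ n s) + dist (ρ n s) (c n) = dist q (c n)
      rw [e1, e2]
      have : dist q (c n) = L n := rfl
      rw [this]
      ring
    set T : ℕ → ℝ := fun n => min (L n) (t (k n)) with hTdef
    have hTn : ∀ n : ℕ, (n : ℝ) + 1 ≤ T n := by
      intro n
      exact le_min (hL n) (by linarith [hk1 n])
    have hTpos : ∀ n, 0 < T n := fun n => lt_of_lt_of_le (by positivity) (hTn n)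
    have hTL : ∀ n, T n ≤ L n := fun n => min_le_left _ _
    have hTt : ∀ n, T n ≤ t (k n) := fun n => min_le_right _ _
    -- Estimate 1 : the geodesic from q to (c n) stays D-close to the ray γ (k n)
    have est1 : ∀ n, ∀ s ∈ Icc 0 (T n), dist (ρ n s) (γ (k n) s) ≤ D := by
      intro n s hs
      have hIcc : Icc (0:ℝ) (T n) ⊆ Icc 0 (L n) := Icc_subset_Icc le_rfl (hTL n)
      have hend : dist (ρ n (T n)) (γ (k n) (T n)) ≤ D := by
        have e1 : dist (ρ n (T n)) (c n) = L n - T n := by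
          rw [hρdef]
          simp only
          rw [min_eq_left (hTL n), ← hfL n,
            hfgeo n (T n) ⟨(hTpos n).le, hTL n⟩ (dist q (c n)) ⟨hL0 n, le_rfl⟩,
            abs_of_nonpos (by linarith [hTL n])]
          ring
        have e2 : dist (c n) (γ (k n) (T n)) = t (k n) - T n := by
          rw [hcdef]
          simp only
          rw [hγ (k n) (t (k n)) (T n) (ht0 _) (hTpos n).le,
            abs_of_nonneg (by linarith [hTt n])]
        have habs : L n + t (k n) - 2 * T n ≤ D := by
          rcases le_total (L n) (t (k n)) with h | h
          · have : T n = L n := min_eq_left h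
            have := (abs_le.1 (hLd n)).1
            linarith
          · have : T n = t (k n) := min_eq_right h
            have := (abs_le.1 (hLd n)).2
            linarith
        calc dist (ρ n (T n)) (γ (k n) (T n))
            ≤ dist (ρ n (T n)) (c n) + dist (c n) (γ (k n) (T n)) := dist_triangle _ _ _
          _ ≤ D := by rw [e1, e2]; linarith
      have hzero : dist (ρ n 0) (γ (k n) 0) = D := by
        rw [hρ0 n, hstart (k n), dist_comm]
      have := conv_lemma (hTpos n)
        (fun a ha b hb => hρgeo n a (hIcc ha) b (hIcc hb))
        (fun a ha b hb => hγ (k n) a b ha.1 hb.1) hs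
      rw [hzero] at this
      have hl0 : 0 ≤ s / T n := div_nonneg hs.1 (hTpos n).le
      have hl1 : s / T n ≤ 1 := by
        rw [div_le_one (hTpos n)]; exact hs.2
      nlinarith [hend, this]
    -- Cauchy property
    have hcau : ∀ s : ℝ, 0 ≤ s → CauchySeq (fun n => ρ n s) := by
      intro s hs
      rcases eq_or_lt_of_le hs with h0 | hspos
      · have : (fun n => ρ n s) = fun _ => q := by
          funext n; rw [← h0, hρ0 n]
        rw [this]
        exact cauchySeq_const q
      · rw [Metric.cauchySeq_iff]
        intro ε hε
        set Tb := max s (2 * s * (2 * D + 1) / ε) with hTbdef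
        have hTs : s ≤ Tb := le_max_left _ _
        have hTb0 : 0 < Tb := lt_of_lt_of_le hspos hTs
        have hfrac : (s / Tb) * (2 * D + 1) ≤ ε / 2 := by
          have h1 : 2 * s * (2 * D + 1) / ε ≤ Tb := le_max_right _ _
          have h2 : 2 * s * (2 * D + 1) ≤ Tb * ε := by
            rw [div_le_iff₀ hε] at h1; linarith
          rw [div_mul_eq_mul_div, div_le_iff₀ hTb0]
          nlinarith
        obtain ⟨N₁, hN₁⟩ := (Metric.tendsto_atTop.1 (hlim Tb hTb0.le)) (1/2) (by norm_num)
        refine ⟨max N₁ ⌈Tb⌉₊, ?_⟩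
        intro m hm n hn
        have hTm : Tb ≤ T m := by
          have h1 : Tb ≤ (⌈Tb⌉₊ : ℝ) := Nat.le_ceil _
          have h2 : (⌈Tb⌉₊ : ℝ) ≤ (m : ℝ) := by
            exact_mod_cast le_trans (le_max_right N₁ ⌈Tb⌉₊) hm
          linarith [hTn m]
        have hTNn : Tb ≤ T n := by
          have h1 : Tb ≤ (⌈Tb⌉₊ : ℝ) := Nat.le_ceil _
          have h2 : (⌈Tb⌉₊ : ℝ) ≤ (n : ℝ) := by
            exact_mod_cast le_trans (le_max_right N₁ ⌈Tb⌉₊) hn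
          linarith [hTn n]
        have hIm : Icc (0:ℝ) Tb ⊆ Icc 0 (L m) := Icc_subset_Icc le_rfl (le_trans hTm (hTL m))
        have hIn : Icc (0:ℝ) Tb ⊆ Icc 0 (L n) := Icc_subset_Icc le_rfl (le_trans hTNn (hTL n))
        have hconv3 := conv_lemma hTb0
          (fun a ha b hb => hρgeo m a (hIm ha) b (hIm hb))
          (fun a ha b hb => hρgeo n a (hIn ha) b (hIn hb)) ⟨hs, hTs⟩
        have hz : dist (ρ m 0) (ρ n 0) = 0 := by rw [hρ0 m, hρ0 n, dist_self]
        have hbound : dist (ρ m (Tb)) (ρ n (Tb)) ≤ 2 * D + 1 := by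
          have b1 : dist (ρ m Tb) (γ (k m) Tb) ≤ D := est1 m Tb ⟨hTb0.le, hTm⟩
          have b2 : dist (γ (k m) Tb) (γ' Tb) < 1/2 := by
            apply hN₁
            calc N₁ ≤ max N₁ ⌈Tb⌉₊ := le_max_left _ _
              _ ≤ m := hm
              _ ≤ k m := hk2 m
          have b3 : dist (γ (k n) Tb) (γ' Tb) < 1/2 := by
            apply hN₁
            calc N₁ ≤ max N₁ ⌈Tb⌉₊ := le_max_left _ _
              _ ≤ n := hn
              _ ≤ k n := hk2 n
          have b4 : dist (ρ n Tb) (γ (k n) Tb) ≤ D := est1 n Tb ⟨hTb0.le, hTNn⟩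
          calc dist (ρ m Tb) (ρ n Tb)
              ≤ dist (ρ m Tb) (γ (k m) Tb) + dist (γ (k m) Tb) (γ' Tb) +
                dist (γ' Tb) (γ (k n) Tb) + dist (γ (k n) Tb) (ρ n Tb) := by
                have t1 := dist_triangle4 (ρ m Tb) (γ (k m) Tb) (γ (k n) Tb) (ρ n Tb)
                have t2 := dist_triangle (γ (k m) Tb) (γ' Tb) (γ (k n) Tb)
                linarith
            _ ≤ 2 * D + 1 := by
                rw [dist_comm (γ' Tb) (γ (k n) Tb), dist_comm (γ (k n) Tb) (ρ n Tb)]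
                linarith
        have hl0 : 0 ≤ s / Tb := div_nonneg hs (hTb0.le)
        calc dist (ρ m s) (ρ n s)
            ≤ (1 - s / Tb) * dist (ρ m 0) (ρ n 0) + (s / Tb) * dist (ρ m Tb) (ρ n Tb) :=
            hconv3
          _ ≤ (s / Tb) * (2 * D + 1) := by
              rw [hz]
              have := mul_le_mul_of_nonneg_left hbound hl0
              linarith
          _ ≤ ε / 2 := hfrac
          _ < ε := by linarith
    -- the limit ray
    have hσex : ∀ s : ℝ, 0 ≤ s → ∃ z : X, Tendsto (fun n => ρ n s) atTop (nhds z) :=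
      fun s hs => cauchySeq_tendsto_of_complete (hcau s hs)
    set σ : ℝ → X := fun s => if hs : 0 ≤ s then (hσex s hs).choose else q with hσdef
    have hσ : ∀ s : ℝ, ∀ hs : 0 ≤ s, Tendsto (fun n => ρ n s) atTop (nhds (σ s)) := by
      intro s hs
      rw [hσdef]
      simp only [dif_pos hs]
      exact (hσex s hs).choose_spec
    have hLbig : ∀ s : ℝ, 0 ≤ s → ∀ᶠ n in atTop, s ≤ L n := by
      intro s hs
      rw [eventually_atTop]
      refine ⟨⌈s⌉₊, fun n hn => ?_⟩
      have h1 : s ≤ (⌈s⌉₊ : ℝ) := Nat.le_ceil _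
      have h2 : ((⌈s⌉₊ : ℕ) : ℝ) ≤ (n : ℝ) := by exact_mod_cast hn
      linarith [hL n]
    have hσray : IsRay σ := by
      intro s u hs hu
      have h1 : Tendsto (fun n => dist (ρ n s) (ρ n u)) atTop (nhds (dist (σ s) (σ u))) :=
        (hσ s hs).dist (hσ u hu)
      have h2 : ∀ᶠ n in atTop, dist (ρ n s) (ρ n u) = |s - u| := by
        filter_upwards [hLbig s hs, hLbig u hu] with n h3 h4
        exact hρgeo n s ⟨hs, h3⟩ u ⟨hu, h4⟩
      have h3 : Tendsto (fun n => dist (ρ n s) (ρ n u)) atTop (nhds |s - u|) :=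
        Tendsto.congr' (EventuallyEq.symm h2) tendsto_const_nhds
      exact tendsto_nhds_unique h1 h3
    have hσC : ∀ s : ℝ, 0 ≤ s → σ s ∈ C := fun s hs =>
      hclosed.mem_of_tendsto (hσ s hs) (Eventually.of_forall fun n => hρC n s hs)
    have hσasym : ∀ s : ℝ, 0 ≤ s → dist (σ s) (γ' s) ≤ D := by
      intro s hs
      have h1 : Tendsto (fun n => dist (ρ n s) (γ' s)) atTop (nhds (dist (σ s) (γ' s))) :=
        (hσ s hs).dist tendsto_const_nhds
      have hkt : Tendsto k atTop atTop := tendsto_atTop_mono hk2 tendsto_id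
      have h2 : Tendsto (fun n => D + dist (γ (k n) s) (γ' s)) atTop (nhds (D + 0)) :=
        tendsto_const_nhds.add
          (tendsto_iff_dist_tendsto_zero.1 ((hlim s hs).comp hkt))
      have h3 : ∀ᶠ n in atTop, dist (ρ n s) (γ' s) ≤ D + dist (γ (k n) s) (γ' s) := by
        have hTn' : ∀ᶠ n in atTop, s ≤ T n := by
          rw [eventually_atTop]
          refine ⟨⌈s⌉₊, fun n hn => ?_⟩
          have hh1 : s ≤ (⌈s⌉₊ : ℝ) := Nat.le_ceil _
          have hh2 : ((⌈s⌉₊ : ℕ) : ℝ) ≤ (n : ℝ) := by exact_mod_cast hn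
          linarith [hTn n]
        filter_upwards [hTn'] with n h4
        calc dist (ρ n s) (γ' s) ≤ dist (ρ n s) (γ (k n) s) + dist (γ (k n) s) (γ' s) :=
            dist_triangle _ _ _
          _ ≤ D + dist (γ (k n) s) (γ' s) := by
              linarith [est1 n s ⟨hs, h4⟩]
      have := le_of_tendsto_of_tendsto h1 h2 h3
      simpa using this
    refine ⟨σ, hσray, ?_, hσC⟩
    rw [← hcls']
    exact Quotient.sound ⟨D, fun s hs => hσasym s hs⟩


end CK
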